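/- As formal power series over ℚ: ∏_{N≥1} (1 − z^N)^{Ω(N,T)} = det(1 − z·T), where Ω(N,T) := (1/N)∑_{g|N} μ(g) Tr(T^{N/g}), provided each Ω(N,T) is an integer (which holds when T has nonnegative integer entries counting closed paths); equivalently, taking formal logarithms, −∑_{N≥1} ∑_{k≥1} Ω(N,T)·z^{Nk}/k = −∑_{N≥1} Tr(T^N) z^N / N = log det(1 − zT). -/

import Mathlib

open PowerSeries
open scoped ArithmeticFunction

/-- `Ω(m, T) = (1/m) ∑_{g | m} μ(g) · Tr(T^{m/g})` as a rational number. -/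
noncomputable def OmegaW {n : ℕ} (m : ℕ) (T : Matrix (Fin n) (Fin n) ℚ) : ℚ :=
  (1 / (m : ℚ)) * ∑ g ∈ m.divisors, (ArithmeticFunction.moebius g : ℚ) * (T ^ (m / g)).trace

/-- The formal exponential of a power series (correct whenever the constant
term vanishes): the `n`-th coefficient is `∑_{k ≤ n} (1/k!) · coeff n (f^k)`. -/
noncomputable def expPS (f : PowerSeries ℚ) : PowerSeries ℚ :=
  PowerSeries.mk fun n =>
    ∑ k ∈ Finset.range (n + 1), ((k.factorial : ℚ)⁻¹) * (coeff n (f ^ k))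

/-- The series `g(z) = ∑_{N ≥ 1} Tr(T^N) z^N / N`. -/
noncomputable def traceSeries {n : ℕ} (T : Matrix (Fin n) (Fin n) ℚ) :
    PowerSeries ℚ :=
  PowerSeries.mk fun N => if N = 0 then 0 else (T ^ N).trace / N

/-! ### Auxiliary lemmas -/

section Aux

lemma sum_smul_omega {n : ℕ} (T : Matrix (Fin n) (Fin n) ℚ) (m : ℕ) (hm : 0 < m) :
    ∑ d ∈ m.divisors, (d : ℚ) * OmegaW d T = (T ^ m).trace := by
  have key := (ArithmeticFunction.sum_eq_iff_sum_smul_moebius_eq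
      (R := ℚ) (f := fun d => (d : ℚ) * OmegaW d T)
      (g := fun N => (T ^ N).trace)).mpr ?_ m hm
  · exact key
  · intro N hN
    rw [Nat.sum_divisorsAntidiagonal (f := fun g e => (ArithmeticFunction.moebius g) • (T ^ e).trace)]
    unfold OmegaW
    have hN0 : (N : ℚ) ≠ 0 := Nat.cast_ne_zero.mpr hN.ne'
    rw [← mul_assoc, mul_one_div, div_self hN0, one_mul]
    simp [zsmul_eq_mul]

lemma part1 {n : ℕ} (T : Matrix (Fin n) (Fin n) ℚ) :
    (PowerSeries.mk fun m =>
        ∑ d ∈ m.divisors, OmegaW d T * (1 / ((m / d : ℕ) : ℚ))) = traceSeries T := by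
  ext m
  rw [coeff_mk, traceSeries, coeff_mk]
  rcases Nat.eq_zero_or_pos m with rfl | hm
  · simp
  rw [if_neg hm.ne']
  have hm0 : (m : ℚ) ≠ 0 := Nat.cast_ne_zero.mpr hm.ne'
  have : ∀ d ∈ m.divisors, OmegaW d T * (1 / ((m / d : ℕ) : ℚ))
      = (1 / (m : ℚ)) * ((d : ℚ) * OmegaW d T) := by
    intro d hd
    obtain ⟨hdvd, -⟩ := Nat.mem_divisors.mp hd
    have hd0 : (d : ℚ) ≠ 0 := Nat.cast_ne_zero.mpr (Nat.pos_of_mem_divisors hd).ne'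
    rw [Nat.cast_div hdvd hd0]
    field_simp
  rw [Finset.sum_congr rfl this, ← Finset.mul_sum, sum_smul_omega T m hm]
  field_simp

variable {S R : Type*} [CommRing S] [CommRing R] [Algebra S R] (D : Derivation S R R)

lemma deriv_prod {ι : Type*} [DecidableEq ι] (s : Finset ι) (g : ι → R) :
    D (∏ i ∈ s, g i) = ∑ i ∈ s, (∏ j ∈ s.erase i, g j) * D (g i) := by
  induction s using Finset.induction_on with
  | empty => simp
  | @insert a s' ha ih =>
    rw [Finset.prod_insert ha, Derivation.leibniz, Finset.sum_insert ha,
      Finset.erase_insert ha]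
    rw [smul_eq_mul, smul_eq_mul, ih, Finset.mul_sum]
    have h2 : ∀ i ∈ s', g a * ((∏ j ∈ s'.erase i, g j) * D (g i))
        = (∏ j ∈ (insert a s').erase i, g j) * D (g i) := by
      intro i hi
      rw [Finset.erase_insert_of_ne (by rintro rfl; exact ha hi),
        Finset.prod_insert (fun h => ha (Finset.mem_of_mem_erase h))]
      ring
    rw [Finset.sum_congr rfl h2]
    exact add_comm _ _

lemma jacobi {m : Type*} [Fintype m] [DecidableEq m] (A : Matrix m m R) :
    D A.det = Matrix.trace (A.adjugate * A.map (D ·)) := by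
  rw [Matrix.det_apply, map_sum]
  have step : ∀ π : Equiv.Perm m, D (Equiv.Perm.sign π • ∏ i, A (π i) i)
      = ∑ i, Equiv.Perm.sign π • ((∏ j ∈ Finset.univ.erase i, A (π j) j) * D (A (π i) i)) := by
    intro π
    rw [Units.smul_def, map_zsmul, deriv_prod, Finset.smul_sum]
    simp only [Units.smul_def]
  rw [Finset.sum_congr rfl fun π _ => step π, Finset.sum_comm]
  have col : ∀ i : m, ∑ π : Equiv.Perm m,
      Equiv.Perm.sign π • ((∏ j ∈ Finset.univ.erase i, A (π j) j) * D (A (π i) i))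
      = (A.updateCol i (fun k => D (A k i))).det := by
    intro i
    rw [Matrix.det_apply]
    refine Finset.sum_congr rfl fun π _ => ?_
    rw [Units.smul_def, Units.smul_def]
    congr 1
    rw [← Finset.mul_prod_erase Finset.univ _ (Finset.mem_univ i),
      Matrix.updateCol_self, mul_comm]
    congr 1
    refine Finset.prod_congr rfl fun j hj => ?_
    rw [Matrix.updateCol_ne (Finset.ne_of_mem_erase hj)]
  rw [Finset.sum_congr rfl fun i _ => col i]
  have cr : ∀ i : m, (A.updateCol i (fun k => D (A k i))).det
      = (Matrix.mulVec A.adjugate (fun k => D (A k i))) i := by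
    intro i
    rw [← Matrix.cramer_eq_adjugate_mulVec, Matrix.cramer_apply]
  rw [Finset.sum_congr rfl fun i _ => cr i]
  rw [Matrix.trace]
  refine Finset.sum_congr rfl fun i _ => ?_
  rw [Matrix.mulVec, Matrix.diag_apply, Matrix.mul_apply]
  rfl

lemma coeff_pow_zero {f : PowerSeries ℚ} (hf : constantCoeff f = 0) {b k : ℕ} (h : b < k) :
    coeff b (f ^ k) = 0 := by
  have : (X : PowerSeries ℚ) ^ k ∣ f ^ k := pow_dvd_pow_of_dvd (X_dvd_iff.mpr hf) k
  exact (X_pow_dvd_iff.mp this) b h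

lemma ode_unique (g u v : PowerSeries ℚ) (hu : d⁄dX ℚ u = g * u) (hv : d⁄dX ℚ v = g * v)
    (h0 : constantCoeff u = constantCoeff v) : u = v := by
  ext m
  induction m using Nat.strong_induction_on with
  | _ m ih =>
    match m with
    | 0 => simpa [coeff_zero_eq_constantCoeff] using h0
    | m + 1 =>
      have hu' := congrArg (coeff m) hu
      have hv' := congrArg (coeff m) hv
      rw [coeff_derivative] at hu' hv'
      have hm1 : ((m : ℚ) + 1) ≠ 0 := by positivity
      have : coeff m (g * u) = coeff m (g * v) := by
        rw [coeff_mul, coeff_mul]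
        refine Finset.sum_congr rfl fun p hp => ?_
        rw [ih p.2 (Nat.lt_succ_of_le (Finset.HasAntidiagonal.antidiagonal.snd_le hp))]
      rw [← hu', ← hv'] at this
      exact mul_right_cancel₀ hm1 this

lemma expPS_const (f : PowerSeries ℚ) : constantCoeff (expPS f) = 1 := by
  rw [← coeff_zero_eq_constantCoeff, expPS, coeff_mk]
  simp

lemma expPS_ode (f : PowerSeries ℚ) (hf : constantCoeff f = 0) :
    d⁄dX ℚ (expPS f) = (d⁄dX ℚ f) * expPS f := by
  ext m
  rw [coeff_derivative, expPS, coeff_mk]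
  rw [coeff_mul]
  have truncE : ∀ p ∈ Finset.HasAntidiagonal.antidiagonal m,
      coeff p.1 (d⁄dX ℚ f) * coeff p.2
        (mk fun n => ∑ k ∈ Finset.range (n + 1), (k.factorial : ℚ)⁻¹ * (coeff n (f ^ k)))
      = ∑ k ∈ Finset.range (m + 1),
          (k.factorial : ℚ)⁻¹ * (coeff p.1 (d⁄dX ℚ f) * coeff p.2 (f ^ k)) := by
    intro p hp
    rw [coeff_mk, Finset.mul_sum]
    rw [Finset.sum_subset (Finset.range_subset_range.mpr
      (Nat.succ_le_succ (Finset.HasAntidiagonal.antidiagonal.snd_le hp)))]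
    · exact Finset.sum_congr rfl fun k _ => by ring
    · intro k _ hk
      have hlt : p.2 < k := by
        have := Finset.mem_range.not.mp hk
        omega
      rw [coeff_pow_zero hf hlt, mul_zero, mul_zero]
  rw [Finset.sum_congr rfl truncE, Finset.sum_comm]
  have key : ∀ k ∈ Finset.range (m + 1),
      ∑ p ∈ Finset.HasAntidiagonal.antidiagonal m,
        (k.factorial : ℚ)⁻¹ * (coeff p.1 (d⁄dX ℚ f) * coeff p.2 (f ^ k))
      = ((k+1).factorial : ℚ)⁻¹ * coeff (m+1) (f ^ (k+1)) * ((m : ℚ) + 1) := by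
    intro k _
    rw [← Finset.mul_sum, ← coeff_mul]
    have hk1 : ((k:ℚ)+1) ≠ 0 := by positivity
    have hpow := congrArg (coeff m) (Derivation.leibniz_pow (d⁄dX ℚ) f (k+1))
    rw [coeff_derivative, Nat.add_sub_cancel, smul_eq_mul, map_nsmul, nsmul_eq_mul,
      mul_comm (f ^ k)] at hpow
    push_cast at hpow
    have hc : coeff m ((d⁄dX ℚ f) * f ^ k)
        = ((k:ℚ)+1)⁻¹ * (coeff (m+1) (f ^ (k+1)) * ((m:ℚ)+1)) := by
      rw [hpow, inv_mul_cancel_left₀ hk1]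
    rw [hc]
    rw [Nat.factorial_succ]
    push_cast
    rw [mul_inv]
    ring
  rw [Finset.sum_congr rfl key]
  rw [Finset.sum_range_succ' (fun k => (k.factorial : ℚ)⁻¹ * coeff (m+1) (f ^ k)) (m+1)]
  rw [pow_zero, coeff_one, if_neg (Nat.succ_ne_zero m), mul_zero, add_zero, Finset.sum_mul]

end Aux

section Det

variable {n : ℕ} (T : Matrix (Fin n) (Fin n) ℚ)

noncomputable def Tp : Matrix (Fin n) (Fin n) (PowerSeries ℚ) := T.map (C)
noncomputable def Amat : Matrix (Fin n) (Fin n) (PowerSeries ℚ) := 1 - (X : PowerSeries ℚ) • Tp T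
noncomputable def Bmat : Matrix (Fin n) (Fin n) (PowerSeries ℚ) :=
  Matrix.of fun i j => mk fun k => (T ^ k) i j

lemma coeff_TpB (i j : Fin n) (m : ℕ) :
    coeff m ((Tp T * Bmat T) i j) = (T ^ (m + 1)) i j := by
  rw [Matrix.mul_apply, map_sum]
  have : ∀ l, coeff m ((Tp T) i l * (Bmat T) l j) = T i l * (T ^ m) l j := by
    intro l
    rw [Tp, Bmat, Matrix.map_apply, Matrix.of_apply, coeff_C_mul, coeff_mk]
  rw [Finset.sum_congr rfl fun l _ => this l, pow_succ', Matrix.mul_apply]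

lemma AB_eq_one : Amat T * Bmat T = 1 := by
  rw [Amat, Matrix.sub_mul, Matrix.one_mul, Matrix.smul_mul]
  refine Matrix.ext fun i j => ?_
  rw [Matrix.sub_apply, Matrix.smul_apply, smul_eq_mul]
  refine PowerSeries.ext fun m => ?_
  rw [map_sub]
  rcases m with - | m
  · rw [coeff_zero_eq_constantCoeff, map_mul, constantCoeff_X, zero_mul,
      ← coeff_zero_eq_constantCoeff]
    · simp [Bmat, Matrix.one_apply, Matrix.one_apply (i := i) (j := j)]
  · rw [coeff_succ_X_mul, coeff_TpB, Bmat, Matrix.of_apply, coeff_mk, sub_self]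
    rw [Matrix.one_apply]
    split <;> simp [coeff_one, Nat.succ_ne_zero]

lemma adj_eq : (Amat T).adjugate = (Amat T).det • Bmat T := by
  have h1 : (Amat T).adjugate * (Amat T * Bmat T) = (Amat T).adjugate := by
    rw [AB_eq_one, Matrix.mul_one]
  rw [← h1, ← Matrix.mul_assoc, Matrix.adjugate_mul, Matrix.smul_mul, Matrix.one_mul]

lemma trace_BT : Matrix.trace (Bmat T * Tp T) = d⁄dX ℚ (traceSeries T) := by
  refine PowerSeries.ext fun m => ?_
  rw [coeff_derivative, traceSeries, coeff_mk, if_neg (Nat.succ_ne_zero m)]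
  have hm1 : ((m : ℚ) + 1) ≠ 0 := by positivity
  rw [Matrix.trace, map_sum]
  have : ∀ i, coeff m (((Bmat T * Tp T)).diag i) = (T ^ (m + 1)) i i := by
    intro i
    rw [Matrix.diag_apply, Matrix.mul_apply, map_sum]
    have : ∀ l, coeff m ((Bmat T) i l * (Tp T) l i) = (T ^ m) i l * T l i := by
      intro l
      rw [Tp, Bmat, Matrix.map_apply, Matrix.of_apply, mul_comm, coeff_C_mul, coeff_mk,
        mul_comm]
    rw [Finset.sum_congr rfl fun l _ => this l, pow_succ, Matrix.mul_apply]
  rw [Finset.sum_congr rfl fun i _ => this i]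
  push_cast
  rw [div_mul_cancel₀ _ hm1, Matrix.trace]
  simp [Matrix.diag]

lemma map_deriv_A : (Amat T).map (fun p => d⁄dX ℚ p) = -(Tp T) := by
  refine Matrix.ext fun i j => ?_
  rw [Matrix.map_apply, Amat, Matrix.sub_apply, Matrix.smul_apply, smul_eq_mul, map_sub]
  have h1 : d⁄dX ℚ ((1 : Matrix (Fin n) (Fin n) (PowerSeries ℚ)) i j) = 0 := by
    rw [Matrix.one_apply]
    split <;> simp
  have h2 : d⁄dX ℚ ((X : PowerSeries ℚ) * (Tp T) i j) = (Tp T) i j := by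
    rw [Tp, Matrix.map_apply, Derivation.leibniz, derivative_X, derivative_C]
    simp
  rw [h1, h2, zero_sub, Matrix.neg_apply]

lemma const_detA : constantCoeff (Amat T).det = 1 := by
  have : (Amat T).map (constantCoeff) = 1 := by
    refine Matrix.ext fun i j => ?_
    rw [Matrix.map_apply, Amat, Matrix.sub_apply, Matrix.smul_apply, smul_eq_mul, map_sub,
      map_mul, constantCoeff_X, zero_mul, sub_zero]
    rw [Matrix.one_apply, Matrix.one_apply]
    split <;> simp
  rw [RingHom.map_det, RingHom.mapMatrix_apply, this, Matrix.det_one]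

lemma deriv_detA :
    d⁄dX ℚ (Amat T).det = (d⁄dX ℚ (-(traceSeries T))) * (Amat T).det := by
  rw [jacobi (d⁄dX ℚ) (Amat T), map_deriv_A, adj_eq, Matrix.smul_mul, Matrix.mul_neg,
    smul_neg, Matrix.trace_neg, Matrix.trace_smul, trace_BT, map_neg, smul_eq_mul]
  ring

end Det

/-- `∏_{N≥1} (1 - z^N)^{Ω(N,T)} = det(1 - zT)`, in the equivalent logarithmic
form: the rearrangement `∑_{N≥1} Ω(N,T) ∑_{k≥1} z^{Nk}/k = ∑_{N≥1} Tr(T^N) z^N/N`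
(coefficientwise, the `z^m`-coefficient of the double sum being
`∑_{d | m} Ω(d,T)/(m/d)`), together with `exp(-∑ Tr(T^N) z^N/N) = det(1 - zT)`. -/
theorem stmt7 {n : ℕ} (T : Matrix (Fin n) (Fin n) ℚ)
    (hint : ∀ N : ℕ, 0 < N → ∃ k : ℤ, OmegaW N T = k) :
    (PowerSeries.mk fun m =>
        ∑ d ∈ m.divisors, OmegaW d T * (1 / ((m / d : ℕ) : ℚ))) = traceSeries T
    ∧ expPS (-(traceSeries T)) =
        (1 - (PowerSeries.X : PowerSeries ℚ) • T.map (PowerSeries.C)).det := by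
  constructor
  · exact part1 T
  · have hf0 : constantCoeff (-(traceSeries T)) = 0 := by
      rw [map_neg, ← coeff_zero_eq_constantCoeff, traceSeries, coeff_mk]
      simp
    exact ode_unique (d⁄dX ℚ (-(traceSeries T))) _ _
      (expPS_ode _ hf0) (deriv_detA T)
      ((expPS_const _).trans (const_detA T).symm)
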